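/- arXiv:math/0409551 — 3 statements merged into one kernel-verified Lean document; each statement's English description precedes it below -/
import Mathlib

section
/- A right R-module M is RD-coflat if and only if for every RD-exact sequence 0 → K → L → F → 0 of right R-modules with F pure-projective, the induced sequence 0 → Hom(F,M) → Hom(L,M) → Hom(K,M) → 0 is exact. -/
universe u

open MulOpposite

section RDDefs

variable (R : Type u) [Ring R]

/-- `IsTensorZero R M N l` encodes the statement `∑ mᵢ ⊗ nᵢ = 0` in the tensor product
`M ⊗_R N` of the right `R`-module `M` with the left `R`-module `N`, via the universal
property of the tensor product: every `R`-balanced biadditive map kills the sum. -/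
def IsTensorZero (M N : Type u) [AddCommGroup M] [Module Rᵐᵒᵖ M]
    [AddCommGroup N] [Module R N] (l : List (M × N)) : Prop :=
  ∀ (A : Type u) [AddCommGroup A], ∀ b : M → N → A,
    (∀ m₁ m₂ n, b (m₁ + m₂) n = b m₁ n + b m₂ n) →
    (∀ m n₁ n₂, b m (n₁ + n₂) = b m n₁ + b m n₂) →
    (∀ (r : R) (m : M) (n : N), b (op r • m) n = b m (r • n)) →
    (l.map fun p => b p.1 p.2).sum = 0

/-- A right `R`-module `M` is RD-flat if tensoring with `M` preserves exactness of all
RD-exact sequences of left `R`-modules; equivalently, for every injective linear map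
`f : H → F` of left `R`-modules whose image is a relatively divisible submodule
(`rF ∩ f(H) = r f(H)` for all `r`), the induced map `M ⊗ H → M ⊗ F` is injective. -/
def RDFlat (M : Type u) [AddCommGroup M] [Module Rᵐᵒᵖ M] : Prop :=
  ∀ (H F : Type u) [AddCommGroup H] [Module R H] [AddCommGroup F] [Module R F],
    ∀ f : H →ₗ[R] F, Function.Injective f →
    (∀ (r : R) (h : H) (y : F), f h = r • y → ∃ h' : H, h = r • h') →
    ∀ l : List (M × H),
      IsTensorZero R M F (l.map fun p => (p.1, f p.2)) → IsTensorZero R M H l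

/-- A right `R`-module `N` is RD-injective if every homomorphism into `N` from a
relatively divisible submodule of a right `R`-module extends to the whole module. -/
def RDInjective (N : Type u) [AddCommGroup N] [Module Rᵐᵒᵖ N] : Prop :=
  ∀ (K L : Type u) [AddCommGroup K] [Module Rᵐᵒᵖ K] [AddCommGroup L] [Module Rᵐᵒᵖ L],
    ∀ f : K →ₗ[Rᵐᵒᵖ] L, Function.Injective f →
    (∀ (r : R) (k : K) (y : L), f k = op r • y → ∃ k' : K, k = op r • k') →
    ∀ g : K →ₗ[Rᵐᵒᵖ] N, ∃ h : L →ₗ[Rᵐᵒᵖ] N, h.comp f = g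

/-- An injective linear map `f : K → L` of right `R`-modules is pure if every finite
system of linear equations `∑ⱼ xⱼ aᵢⱼ = kᵢ` with constants in `K` which is solvable
in `L` is solvable in `K`. -/
def IsPure {K L : Type u} [AddCommGroup K] [Module Rᵐᵒᵖ K] [AddCommGroup L]
    [Module Rᵐᵒᵖ L] (f : K →ₗ[Rᵐᵒᵖ] L) : Prop :=
  ∀ (m n : ℕ) (a : Fin m → Fin n → R) (k : Fin m → K),
    (∃ x : Fin n → L, ∀ i, (∑ j, op (a i j) • x j) = f (k i)) →
    ∃ y : Fin n → K, ∀ i, (∑ j, op (a i j) • y j) = k i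

/-- A right `R`-module `M` is RD-coflat if every RD-exact sequence `0 → M → P → Q → 0`
is pure-exact, i.e. whenever `M` embeds as a relatively divisible submodule of a right
module `P`, it is a pure submodule of `P`. -/
def RDCoflat (M : Type u) [AddCommGroup M] [Module Rᵐᵒᵖ M] : Prop :=
  ∀ (P : Type u) [AddCommGroup P] [Module Rᵐᵒᵖ P],
    ∀ f : M →ₗ[Rᵐᵒᵖ] P, Function.Injective f →
    (∀ (r : R) (x : M) (y : P), f x = op r • y → ∃ x' : M, x = op r • x') →
    IsPure R f

/-- A right `R`-module `N` is pure-injective if every homomorphism into `N` from a pure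
submodule of a right `R`-module extends to the whole module. -/
def PureInjective (N : Type u) [AddCommGroup N] [Module Rᵐᵒᵖ N] : Prop :=
  ∀ (K L : Type u) [AddCommGroup K] [Module Rᵐᵒᵖ K] [AddCommGroup L] [Module Rᵐᵒᵖ L],
    ∀ f : K →ₗ[Rᵐᵒᵖ] L, Function.Injective f → IsPure R f →
    ∀ g : K →ₗ[Rᵐᵒᵖ] N, ∃ h : L →ₗ[Rᵐᵒᵖ] N, h.comp f = g

/-- A right `R`-module `F` is pure-projective if every homomorphism from `F` to a
quotient in a pure-exact sequence lifts. -/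
def PureProjective (F : Type u) [AddCommGroup F] [Module Rᵐᵒᵖ F] : Prop :=
  ∀ (L Q : Type u) [AddCommGroup L] [Module Rᵐᵒᵖ L] [AddCommGroup Q] [Module Rᵐᵒᵖ Q],
    ∀ p : L →ₗ[Rᵐᵒᵖ] Q, Function.Surjective p → IsPure R (LinearMap.ker p).subtype →
    ∀ g : F →ₗ[Rᵐᵒᵖ] Q, ∃ h : F →ₗ[Rᵐᵒᵖ] L, p.comp h = g

/-- A right `R`-module `F` is RD-projective if every homomorphism from `F` to a
quotient in an RD-exact sequence (the kernel is a relatively divisible submodule)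
lifts. -/
def RDProjective (F : Type u) [AddCommGroup F] [Module Rᵐᵒᵖ F] : Prop :=
  ∀ (L Q : Type u) [AddCommGroup L] [Module Rᵐᵒᵖ L] [AddCommGroup Q] [Module Rᵐᵒᵖ Q],
    ∀ p : L →ₗ[Rᵐᵒᵖ] Q, Function.Surjective p →
    (∀ (r : R) (x : L), p x = 0 → (∃ y : L, x = op r • y) →
      ∃ z : L, p z = 0 ∧ x = op r • z) →
    ∀ g : F →ₗ[Rᵐᵒᵖ] Q, ∃ h : F →ₗ[Rᵐᵒᵖ] L, p.comp h = g

end RDDefs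

/-!
Everything turns on pushing an RD-exact sequence `0 → K → L → F → 0` out along a map
`g : K → M`: the result `0 → M → P → F → 0` is again RD-exact, and `g` extends to `L` as soon
as it splits. If `M` is RD-coflat, it is pure-exact and hence splits because `F` is
pure-projective. Conversely, a finite system `∑ⱼ xⱼ aᵢⱼ = kᵢ` over `M` that is solvable in an
RD-extension `M ↪ P` gives the pushout of the presentation `Rᵐ → Rⁿ → F → 0` of a finitely
presented, hence pure-projective, module `F` along `eᵢ ↦ kᵢ`. That pushout maps to `P`
compatibly with `M ↪ P`, so it is RD-exact, and a retraction onto `M` solves the system in `M`.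
-/

section

variable {S K L M X : Type*} [Ring S] [AddCommGroup K] [Module S K] [AddCommGroup L]
  [Module S L] [AddCommGroup M] [Module S M] [AddCommGroup X] [Module S X]

theorem Function.Exact.comp_eq_zero_iff_exists_eq_comp {F : Type*} [AddCommGroup F]
    [Module S F] {f : K →ₗ[S] L} {p : L →ₗ[S] F} (hfp : Function.Exact f p)
    (hp : Function.Surjective p) (h : L →ₗ[S] M) :
    h ∘ₗ f = 0 ↔ ∃ q : F →ₗ[S] M, h = q ∘ₗ p := by
  refine ⟨fun hh => ?_, ?_⟩
  · refine ⟨(LinearMap.range f).liftQ h (LinearMap.range_le_ker_iff.2 hh) ∘ₗ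
      (hfp.linearEquivOfSurjective hp).symm.toLinearMap, ?_⟩
    ext x
    simp
  · rintro ⟨q, rfl⟩
    rw [LinearMap.comp_assoc, hfp.linearMap_comp_eq_zero, LinearMap.comp_zero]

namespace LinearMap

variable (f : K →ₗ[S] L) (g : K →ₗ[S] M)

abbrev Pushout := (L × M) ⧸ range (f.prod (-g))

namespace Pushout

def inl : L →ₗ[S] f.Pushout g := (range (f.prod (-g))).mkQ ∘ₗ LinearMap.inl S L M

def inr : M →ₗ[S] f.Pushout g := (range (f.prod (-g))).mkQ ∘ₗ LinearMap.inr S L M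

theorem inl_comp : inl f g ∘ₗ f = inr f g ∘ₗ g := by
  ext k
  simp only [inl, inr, comp_apply, inl_apply, inr_apply, Submodule.mkQ_apply,
    Submodule.Quotient.eq]
  exact ⟨k, by simp⟩

variable {f g}

def desc (a : L →ₗ[S] X) (b : M →ₗ[S] X) (h : a ∘ₗ f = b ∘ₗ g) : f.Pushout g →ₗ[S] X :=
  (range (f.prod (-g))).liftQ (a.coprod b) <| by
    rintro _ ⟨k, rfl⟩
    simpa [← sub_eq_add_neg, sub_eq_zero] using congr($h k)

theorem desc_comp_inr (a : L →ₗ[S] X) (b : M →ₗ[S] X) (h : a ∘ₗ f = b ∘ₗ g) :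
    desc a b h ∘ₗ inr f g = b := by
  ext m
  simp [desc, inr]

variable (f g)

theorem inr_injective (hf : Function.Injective f) : Function.Injective (inr f g) := by
  rw [← ker_eq_bot, eq_bot_iff]
  rintro m hm
  obtain ⟨k, hk⟩ : ((0 : L), m) ∈ range (f.prod (-g)) :=
    (Submodule.Quotient.mk_eq_zero _).1 hm
  obtain rfl : k = 0 := hf (by simpa using congr(Prod.fst $hk))
  simpa using congr(Prod.snd $hk).symm

theorem exists_exact_inr {F : Type*} [AddCommGroup F] [Module S F] {p : L →ₗ[S] F}
    (hfp : Function.Exact f p) (hp : Function.Surjective p) :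
    ∃ π : f.Pushout g →ₗ[S] F, Function.Exact (inr f g) π ∧ Function.Surjective π := by
  refine ⟨desc p 0 (by rw [hfp.linearMap_comp_eq_zero, zero_comp]), ?_, ?_⟩
  · refine exact_of_comp_of_mem_range (by ext m; simp [desc, inr]) fun z hz => ?_
    obtain ⟨⟨l, m⟩, rfl⟩ := Submodule.mkQ_surjective _ z
    obtain ⟨k, rfl⟩ := (hfp l).1 (by simpa [desc] using hz)
    refine ⟨m + g k, (Submodule.Quotient.eq _).2 ⟨-k, ?_⟩⟩
    simp
  · intro y
    obtain ⟨l, rfl⟩ := hp y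
    exact ⟨inl f g l, by simp [desc, inl]⟩

end Pushout

end LinearMap

end

section RelDivisible

variable (R : Type u) [Ring R] {K L P : Type*} [AddCommGroup K] [Module Rᵐᵒᵖ K]
  [AddCommGroup L] [Module Rᵐᵒᵖ L] [AddCommGroup P] [Module Rᵐᵒᵖ P]

/-- `f(K) ∩ L r = f(K r)` for all `r`. -/
def IsRelDivisible (f : K →ₗ[Rᵐᵒᵖ] L) : Prop :=
  ∀ (r : R) (k : K) (y : L), f k = op r • y → ∃ k' : K, k = op r • k'

variable {R}

theorem IsRelDivisible.of_comp {f : K →ₗ[Rᵐᵒᵖ] L} {a : L →ₗ[Rᵐᵒᵖ] P}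
    (h : IsRelDivisible R (a ∘ₗ f)) : IsRelDivisible R f :=
  fun r k y hk => h r k (a y) (by rw [LinearMap.comp_apply, hk, map_smul])

theorem LinearMap.Pushout.isRelDivisible_inr {f : K →ₗ[Rᵐᵒᵖ] L} (g : K →ₗ[Rᵐᵒᵖ] P)
    (hf : IsRelDivisible R f) : IsRelDivisible R (inr f g) := by
  intro r m z hm
  obtain ⟨⟨l, m₁⟩, rfl⟩ := Submodule.mkQ_surjective _ z
  obtain ⟨k, hk⟩ : ((0 : L), m) - op r • (l, m₁) ∈ range (f.prod (-g)) :=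
    (Submodule.Quotient.eq _).1 (by rw [Submodule.Quotient.mk_smul]; simpa [inr] using hm)
  obtain ⟨k', hk'⟩ := hf r (-k) l (by simpa [neg_eq_iff_eq_neg] using congr(Prod.fst $hk))
  refine ⟨m₁ + g k', ?_⟩
  have hm : m = op r • m₁ + g (-k) := by
    have hgk : -g k = m - op r • m₁ := by simpa using congr(Prod.snd $hk)
    rw [map_neg, hgk]
    abel
  rw [hm, hk', map_smul, smul_add]

end RelDivisible

section Purity

variable (R : Type u) [Ring R]

/-- `eᵢ ↦ ∑ⱼ eⱼ aᵢⱼ`; its cokernel is the right module presented by the system `a`. -/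
def relMap {m n : ℕ} (a : Fin m → Fin n → R) : (Fin m → Rᵐᵒᵖ) →ₗ[Rᵐᵒᵖ] (Fin n → Rᵐᵒᵖ) :=
  Fintype.linearCombination Rᵐᵒᵖ fun i j => op (a i j)

variable {R}

theorem map_relMap_single {L : Type*} [AddCommGroup L] [Module Rᵐᵒᵖ L] {m n : ℕ}
    (a : Fin m → Fin n → R) (w : (Fin n → Rᵐᵒᵖ) →ₗ[Rᵐᵒᵖ] L) (i : Fin m) :
    w (relMap R a (Pi.single i 1)) = ∑ j, op (a i j) • w (Pi.single j 1) := by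
  rw [relMap, Fintype.linearCombination_apply_single, one_smul,
    pi_eq_sum_univ' fun j => op (a i j), map_sum]
  simp_rw [map_smul]

theorem isPure_iff_exists_comp_relMap {K L : Type u} [AddCommGroup K] [Module Rᵐᵒᵖ K]
    [AddCommGroup L] [Module Rᵐᵒᵖ L] (f : K →ₗ[Rᵐᵒᵖ] L) :
    IsPure R f ↔ ∀ (m n : ℕ) (a : Fin m → Fin n → R) (u : (Fin m → Rᵐᵒᵖ) →ₗ[Rᵐᵒᵖ] K)
      (v : (Fin n → Rᵐᵒᵖ) →ₗ[Rᵐᵒᵖ] L), f ∘ₗ u = v ∘ₗ relMap R a →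
        ∃ w : (Fin n → Rᵐᵒᵖ) →ₗ[Rᵐᵒᵖ] K, w ∘ₗ relMap R a = u := by
  constructor
  · intro hf m n a u v huv
    obtain ⟨y, hy⟩ := hf m n a (fun i => u (Pi.single i 1))
      ⟨fun j => v (Pi.single j 1), fun i => by
        rw [← map_relMap_single, ← LinearMap.comp_apply, ← huv, LinearMap.comp_apply]⟩
    refine ⟨Fintype.linearCombination Rᵐᵒᵖ y, ?_⟩
    ext i
    simp [map_relMap_single, hy]
  · rintro hf m n a k ⟨x, hx⟩
    obtain ⟨w, hw⟩ := hf m n a (Fintype.linearCombination Rᵐᵒᵖ k)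
      (Fintype.linearCombination Rᵐᵒᵖ x) (by ext i; simp [map_relMap_single, hx])
    refine ⟨fun j => w (Pi.single j 1), fun i => ?_⟩
    rw [← map_relMap_single, ← LinearMap.comp_apply, hw, Fintype.linearCombination_apply_single,
      one_smul]

theorem IsPure.range_subtype {M P : Type u} [AddCommGroup M] [Module Rᵐᵒᵖ M]
    [AddCommGroup P] [Module Rᵐᵒᵖ P] {ι : M →ₗ[Rᵐᵒᵖ] P} (h : IsPure R ι) :
    IsPure R (LinearMap.range ι).subtype := by
  rintro m n a k ⟨x, hx⟩
  choose k' hk' using fun i => LinearMap.mem_range.1 (k i).2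
  obtain ⟨y, hy⟩ := h m n a k' ⟨x, fun i => by rw [hk']; exact hx i⟩
  refine ⟨fun j => ⟨ι (y j), y j, rfl⟩, fun i => Subtype.ext ?_⟩
  simp only [Submodule.coe_sum, Submodule.coe_smul, ← hk', ← hy, map_sum, map_smul]

end Purity

section PureProjective

variable {R : Type u} [Ring R]

theorem pureProjective_relMap_cokernel {m n : ℕ} (a : Fin m → Fin n → R) :
    PureProjective R ((Fin n → Rᵐᵒᵖ) ⧸ LinearMap.range (relMap R a)) := by
  intro L Q _ _ _ _ p hp hpure g
  obtain ⟨ℓ, hℓ⟩ :=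
    Module.projective_lifting_property p (g ∘ₗ (LinearMap.range (relMap R a)).mkQ) hp
  have hker : p ∘ₗ ℓ ∘ₗ relMap R a = 0 := by
    rw [← LinearMap.comp_assoc, hℓ, LinearMap.comp_assoc, LinearMap.range_mkQ_comp,
      LinearMap.comp_zero]
  obtain ⟨w, hw⟩ := (isPure_iff_exists_comp_relMap _).1 hpure m n a
    ((ℓ ∘ₗ relMap R a).codRestrict _ fun c => LinearMap.range_le_ker_iff.2 hker ⟨c, rfl⟩) ℓ rfl
  refine ⟨(LinearMap.range (relMap R a)).liftQ (ℓ - (LinearMap.ker p).subtype ∘ₗ w) ?_, ?_⟩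
  · rw [LinearMap.range_le_ker_iff, LinearMap.sub_comp, LinearMap.comp_assoc, hw,
      LinearMap.subtype_comp_codRestrict, sub_self]
  · refine Submodule.linearMap_qext _ ?_
    rw [LinearMap.comp_assoc, Submodule.liftQ_mkQ, LinearMap.comp_sub, ← LinearMap.comp_assoc,
      LinearMap.comp_ker_subtype, LinearMap.zero_comp, sub_zero, hℓ]

theorem PureProjective.exists_retraction {M P F : Type u} [AddCommGroup M] [Module Rᵐᵒᵖ M]
    [AddCommGroup P] [Module Rᵐᵒᵖ P] [AddCommGroup F] [Module Rᵐᵒᵖ F] (hF : PureProjective R F)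
    {ι : M →ₗ[Rᵐᵒᵖ] P} {π : P →ₗ[Rᵐᵒᵖ] F} (hexact : Function.Exact ι π)
    (hι : Function.Injective ι) (hπ : Function.Surjective π) (hpure : IsPure R ι) :
    ∃ ρ : P →ₗ[Rᵐᵒᵖ] M, ρ ∘ₗ ι = LinearMap.id := by
  have hker : IsPure R (LinearMap.ker π).subtype := by
    rw [hexact.linearMap_ker_eq]
    exact hpure.range_subtype
  obtain ⟨s, hs⟩ := hF P F π hπ hker LinearMap.id
  exact ((hexact.split_tfae hι hπ).out 0 1 rfl rfl).mp ⟨s, hs⟩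

end PureProjective

section RDCoflat

open LinearMap.Pushout

variable {R : Type u} [Ring R] {M : Type u} [AddCommGroup M] [Module Rᵐᵒᵖ M]

theorem RDCoflat.exists_comp_eq (hM : RDCoflat R M) {K L F : Type u} [AddCommGroup K]
    [Module Rᵐᵒᵖ K] [AddCommGroup L] [Module Rᵐᵒᵖ L] [AddCommGroup F] [Module Rᵐᵒᵖ F]
    {f : K →ₗ[Rᵐᵒᵖ] L} {p : L →ₗ[Rᵐᵒᵖ] F} (hfp : Function.Exact f p) (hf : Function.Injective f)
    (hp : Function.Surjective p) (hRD : IsRelDivisible R f) (hF : PureProjective R F)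
    (g : K →ₗ[Rᵐᵒᵖ] M) : ∃ h : L →ₗ[Rᵐᵒᵖ] M, h ∘ₗ f = g := by
  obtain ⟨π, hexact, hπ⟩ := exists_exact_inr f g hfp hp
  have hinj := inr_injective f g hf
  obtain ⟨ρ, hρ⟩ := hF.exists_retraction hexact hinj hπ
    (hM _ _ hinj (isRelDivisible_inr g hRD))
  refine ⟨ρ ∘ₗ inl f g, ?_⟩
  rw [LinearMap.comp_assoc, inl_comp, ← LinearMap.comp_assoc, hρ, LinearMap.id_comp]

theorem rdCoflat_of_exists_retraction
    (h : ∀ (L F : Type u) [AddCommGroup L] [Module Rᵐᵒᵖ L] [AddCommGroup F] [Module Rᵐᵒᵖ F]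
      (f : M →ₗ[Rᵐᵒᵖ] L) (p : L →ₗ[Rᵐᵒᵖ] F), Function.Exact f p → Function.Injective f →
      Function.Surjective p → IsRelDivisible R f → PureProjective R F →
      ∃ ρ : L →ₗ[Rᵐᵒᵖ] M, ρ ∘ₗ f = LinearMap.id) :
    RDCoflat R M := by
  intro P _ _ f hf hRD
  rw [isPure_iff_exists_comp_relMap]
  intro m n a u v huv
  obtain ⟨π, hexact, hπ⟩ := exists_exact_inr (relMap R a) u
    (LinearMap.exact_map_mkQ_range _) (Submodule.mkQ_surjective _)
  have hcomp : desc v f huv.symm ∘ₗ inr (relMap R a) u = f := desc_comp_inr _ _ _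
  obtain ⟨ρ, hρ⟩ := h _ _ _ π hexact
    (.of_comp (f := desc v f huv.symm) (by rwa [← LinearMap.coe_comp, hcomp]))
    hπ (.of_comp (a := desc v f huv.symm) (by rwa [hcomp])) (pureProjective_relMap_cokernel a)
  refine ⟨ρ ∘ₗ inl (relMap R a) u, ?_⟩
  rw [LinearMap.comp_assoc, inl_comp, ← LinearMap.comp_assoc, hρ, LinearMap.id_comp]

end RDCoflat

/-- A right `R`-module `M` is RD-coflat if and only if for every RD-exact sequence
`0 → K → L → F → 0` of right `R`-modules with `F` pure-projective, the induced
sequence `0 → Hom(F,M) → Hom(L,M) → Hom(K,M) → 0` is exact. -/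
theorem rdCoflat_iff_hom_exact (R : Type u) [Ring R]
    (M : Type u) [AddCommGroup M] [Module Rᵐᵒᵖ M] :
    RDCoflat R M ↔
      ∀ (K L F : Type u) [AddCommGroup K] [Module Rᵐᵒᵖ K] [AddCommGroup L]
        [Module Rᵐᵒᵖ L] [AddCommGroup F] [Module Rᵐᵒᵖ F],
        ∀ (f : K →ₗ[Rᵐᵒᵖ] L) (p : L →ₗ[Rᵐᵒᵖ] F),
        Function.Injective f → Function.Surjective p →
        (∀ x : L, p x = 0 ↔ x ∈ LinearMap.range f) →
        (∀ (r : R) (k : K) (y : L), f k = op r • y → ∃ k' : K, k = op r • k') →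
        PureProjective R F →
        Function.Injective (fun q : F →ₗ[Rᵐᵒᵖ] M => q.comp p) ∧
        (∀ h : L →ₗ[Rᵐᵒᵖ] M, h.comp f = 0 ↔ ∃ q : F →ₗ[Rᵐᵒᵖ] M, h = q.comp p) ∧
        Function.Surjective (fun h : L →ₗ[Rᵐᵒᵖ] M => h.comp f) := by
  constructor
  · intro hM K L F _ _ _ _ _ _ f p hf hp hfp hRD hF
    exact ⟨fun _ _ => (LinearMap.cancel_right hp).1,
      Function.Exact.comp_eq_zero_iff_exists_eq_comp hfp hp, hM.exists_comp_eq hfp hf hp hRD hF⟩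
  · intro h
    refine rdCoflat_of_exists_retraction fun L F _ _ _ _ f p hfp hf hp hRD hF => ?_
    exact (h M L F f p hf hp hfp hRD hF).2.2 LinearMap.id
end

section
/- A right R-module M is RD-injective if and only if M is RD-coflat and satisfies the following finite intersection condition: for any family of subgroups (N_i)_{i∈I} with each N_i of the form (Mr_i : s_i) = {x ∈ M | xs_i ∈ Mr_i} for some r_i, s_i ∈ R, and any family (x_i)_{i∈I} of elements of M, if the cosets x_i + N_i have the finite intersection property, then their total intersection is non-empty. -/
universe u

open MulOpposite

/-!
RD-injectivity of `M` amounts to the splitting of every RD-embedding `e : M → P`: an arbitrary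
RD-embedding `K → L` is pushed out along the map `K → M` to be extended. A split embedding is pure,
whence RD-coflatness. For the coset condition, split the embedding of `M` into the module obtained
by freely adjoining a solution `ξ, (ξᵢ)` of the system `(ξ - xᵢ) sᵢ = ξᵢ rᵢ`; this embedding is RD
because each relation involves finitely many equations, and finite subsystems are solvable in `M`.

Conversely, a retraction of `e` is a maximal partial map `P ⇀ M` (Zorn) which extends `e⁻¹` and
sends `P r` into `M r`. Extending it to a new `x ∈ P` with value `m` amounts to coset conditions on
`m`, one for each relation `n + x a = q r` with `n` in the domain. Every finite subfamily is solvable,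
as `M` is pure in the pushout of the partial map and its domain inclusion, where `x` and the `q`
solve it. The coset condition then provides `m`.
-/

def HasCosetFIP (R : Type u) [Ring R] (M : Type u) [AddCommGroup M] [Module Rᵐᵒᵖ M] : Prop :=
  ∀ (ι : Type u) (r s : ι → R) (x : ι → M),
    (∀ J : Finset ι, ∃ m : M, ∀ i ∈ J, ∃ y : M, op (s i) • (m - x i) = op (r i) • y) →
    ∃ m : M, ∀ i : ι, ∃ y : M, op (s i) • (m - x i) = op (r i) • y

section RDInjectivity

variable {R : Type u} [Ring R] {K L M P : Type u} [AddCommGroup K] [Module Rᵐᵒᵖ K]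
  [AddCommGroup L] [Module Rᵐᵒᵖ L] [AddCommGroup M] [Module Rᵐᵒᵖ M]
  [AddCommGroup P] [Module Rᵐᵒᵖ P]

/-- Taking `r = 0` shows that `RDCompatible f LinearMap.id` says exactly that `f` is an
RD-embedding, injectivity included. -/
def RDCompatible (f : K →ₗ[Rᵐᵒᵖ] L) (g : K →ₗ[Rᵐᵒᵖ] M) : Prop :=
  ∀ (r : R) (k : K) (y : L), f k = op r • y → ∃ z : M, g k = op r • z

theorem RDCompatible.map_eq_zero {f : K →ₗ[Rᵐᵒᵖ] L} {g : K →ₗ[Rᵐᵒᵖ] M}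
    (h : RDCompatible f g) {k : K} (hk : f k = 0) : g k = 0 := by
  obtain ⟨z, hz⟩ := h 0 k 0 (by rw [hk, smul_zero])
  rw [hz, op_zero, zero_smul]

theorem RDCompatible.injective {f : K →ₗ[Rᵐᵒᵖ] L} (h : RDCompatible f LinearMap.id) :
    Function.Injective f :=
  (injective_iff_map_eq_zero f).2 fun _ => h.map_eq_zero

theorem isPure_of_comp_eq_id {f : K →ₗ[Rᵐᵒᵖ] L} (h : L →ₗ[Rᵐᵒᵖ] K)
    (hh : h ∘ₗ f = LinearMap.id) : IsPure R f := by
  rintro m n a k ⟨x, hx⟩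
  refine ⟨fun j => h (x j), fun i => ?_⟩
  rw [← LinearMap.id_apply (R := Rᵐᵒᵖ) (k i), ← hh, LinearMap.comp_apply, ← hx i, map_sum]
  simp only [map_smul]

theorem IsPure.exists_solution {f : K →ₗ[Rᵐᵒᵖ] L} (hf : IsPure R f) {α β : Type*}
    [Fintype α] [Fintype β] (a : α → β → R) (k : α → K)
    (hx : ∃ x : β → L, ∀ i, ∑ j, op (a i j) • x j = f (k i)) :
    ∃ y : β → K, ∀ i, ∑ j, op (a i j) • y j = k i := by
  let eα := Fintype.equivFin α
  let eβ := Fintype.equivFin β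
  obtain ⟨x, hx⟩ := hx
  obtain ⟨y, hy⟩ := hf _ _ (fun i j => a (eα.symm i) (eβ.symm j)) (fun i => k (eα.symm i))
    ⟨fun j => x (eβ.symm j), fun i => by rw [← hx, ← eβ.symm.sum_comp]⟩
  refine ⟨fun j => y (eβ j), fun i => ?_⟩
  rw [← eα.symm_apply_apply i, ← hy, ← eβ.symm.sum_comp]
  simp

/-- The system `c i + m (a i) ∈ M (r i)` is a system of coset conditions: once `x i` solves its
`i`-th condition, `m` solves it iff `m - x i ∈ (M (r i) : a i)`. -/
theorem HasCosetFIP.exists_of_forall_finset (hM : HasCosetFIP R M) {ι : Type u}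
    (c : ι → M) (a r : ι → R)
    (hfin : ∀ J : Finset ι, ∃ m : M, ∀ i ∈ J, ∃ y : M, c i + op (a i) • m = op (r i) • y) :
    ∃ m : M, ∀ i, ∃ y : M, c i + op (a i) • m = op (r i) • y := by
  classical
  have hone : ∀ i, ∃ x : M, ∃ y : M, c i + op (a i) • x = op (r i) • y := fun i => by
    obtain ⟨x, hx⟩ := hfin {i}
    exact ⟨x, hx i (Finset.mem_singleton_self i)⟩
  choose x y hxy using hone
  have shift : ∀ i (m : M), (∃ z, c i + op (a i) • m = op (r i) • z) ↔
      ∃ z, op (a i) • (m - x i) = op (r i) • z := fun i m => by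
    constructor
    · rintro ⟨z, hz⟩
      exact ⟨z - y i, by rw [smul_sub, smul_sub, ← hz, ← hxy]; abel⟩
    · rintro ⟨z, hz⟩
      exact ⟨z + y i, by rw [smul_add, ← hz, ← hxy, smul_sub]; abel⟩
  obtain ⟨m, hm⟩ := hM ι r a x fun J => by
    obtain ⟨m, hm⟩ := hfin J
    exact ⟨m, fun i hi => (shift i m).1 (hm i hi)⟩
  exact ⟨m, fun i => (shift i m).2 (hm i)⟩

abbrev Pushout (f : K →ₗ[Rᵐᵒᵖ] L) (g : K →ₗ[Rᵐᵒᵖ] M) : Type u :=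
  (M × L) ⧸ LinearMap.range (g.prod (-f))

namespace Pushout

variable (f : K →ₗ[Rᵐᵒᵖ] L) (g : K →ₗ[Rᵐᵒᵖ] M)

def inl : M →ₗ[Rᵐᵒᵖ] Pushout f g := (LinearMap.range (g.prod (-f))).mkQ ∘ₗ LinearMap.inl _ _ _

def inr : L →ₗ[Rᵐᵒᵖ] Pushout f g := (LinearMap.range (g.prod (-f))).mkQ ∘ₗ LinearMap.inr _ _ _

theorem inl_apply (m : M) : inl f g m = Submodule.Quotient.mk (m, 0) := rfl

theorem inr_apply (y : L) : inr f g y = Submodule.Quotient.mk (0, y) := rfl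

theorem inr_comp : inr f g ∘ₗ f = inl f g ∘ₗ g := by
  ext k
  simp only [LinearMap.comp_apply, inr_apply, inl_apply, Submodule.Quotient.eq]
  exact ⟨-k, by simp⟩

variable {f g}

theorem rdCompatible_inl (h : RDCompatible f g) : RDCompatible (inl f g) LinearMap.id := by
  rintro r m y hm
  obtain ⟨⟨u, z⟩, rfl⟩ := Submodule.Quotient.mk_surjective _ y
  rw [inl_apply, ← Submodule.Quotient.mk_smul, Submodule.Quotient.eq] at hm
  obtain ⟨k, hk⟩ := hm
  obtain ⟨hgk, hfk⟩ : g k = m - op r • u ∧ f k = op r • z := by simpa using hk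
  obtain ⟨w, hw⟩ := h r k z hfk
  exact ⟨u + w, by rw [LinearMap.id_apply, smul_add, ← hw, hgk, add_sub_cancel]⟩

end Pushout

theorem RDInjective.exists_leftInverse (hM : RDInjective R M) {e : M →ₗ[Rᵐᵒᵖ] P}
    (he : RDCompatible e LinearMap.id) : ∃ ρ : P →ₗ[Rᵐᵒᵖ] M, ρ ∘ₗ e = LinearMap.id :=
  hM M P e he.injective he LinearMap.id

theorem RDInjective.rdCoflat (hM : RDInjective R M) : RDCoflat R M := fun _ _ _ _ _ he =>
  have ⟨ρ, hρ⟩ := hM.exists_leftInverse he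
  isPure_of_comp_eq_id ρ hρ

theorem rdInjective_of_forall_exists_leftInverse
    (hM : ∀ (P : Type u) [AddCommGroup P] [Module Rᵐᵒᵖ P] (e : M →ₗ[Rᵐᵒᵖ] P),
      RDCompatible e LinearMap.id → ∃ ρ : P →ₗ[Rᵐᵒᵖ] M, ρ ∘ₗ e = LinearMap.id) :
    RDInjective R M := by
  intro K L _ _ _ _ f _ hf g
  have hfg : RDCompatible f g := fun r k y hk => by
    obtain ⟨k', rfl⟩ := hf r k y hk
    exact ⟨g k', map_smul g _ k'⟩
  obtain ⟨ρ, hρ⟩ := hM _ (Pushout.inl f g) (Pushout.rdCompatible_inl hfg)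
  refine ⟨ρ ∘ₗ Pushout.inr f g, ?_⟩
  rw [LinearMap.comp_assoc, Pushout.inr_comp, ← LinearMap.comp_assoc, hρ, LinearMap.id_comp]

theorem rdCompatible_mkQ_comp {N : Type u} [AddCommGroup N] [Module Rᵐᵒᵖ N]
    (j : M →ₗ[Rᵐᵒᵖ] N) (W : Submodule Rᵐᵒᵖ N)
    (hW : ∀ w ∈ W, ∃ ψ : N →ₗ[Rᵐᵒᵖ] M, ψ ∘ₗ j = LinearMap.id ∧ ψ w = 0) :
    RDCompatible (W.mkQ ∘ₗ j) LinearMap.id := by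
  rintro r m y hm
  obtain ⟨n, rfl⟩ := Submodule.Quotient.mk_surjective _ y
  rw [LinearMap.comp_apply, Submodule.mkQ_apply, ← Submodule.Quotient.mk_smul,
    Submodule.Quotient.eq] at hm
  obtain ⟨ψ, hψj, hψ⟩ := hW _ hm
  refine ⟨ψ n, ?_⟩
  rwa [map_sub, map_smul, ← LinearMap.comp_apply, hψj, sub_eq_zero] at hψ

section CosetRelation

variable {ι : Type u} (r s : ι → R) (x : ι → M)

/-- The relation `ξ (s i) - (x i) (s i) = ξᵢ (r i)` between the generators `ξ = single none 1` and
`ξᵢ = single (some i) 1` adjoined to `M`. -/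
noncomputable def cosetRelation (i : ι) : M × (Option ι →₀ Rᵐᵒᵖ) :=
  (-(op (s i) • x i), Finsupp.single none (op (s i)) - Finsupp.single (some i) (op (r i)))

theorem coprod_cosetRelation_eq_zero_iff (v : Option ι → M) (i : ι) :
    LinearMap.coprod LinearMap.id (Finsupp.linearCombination Rᵐᵒᵖ v) (cosetRelation r s x i) = 0
      ↔ op (s i) • (v none - x i) = op (r i) • v (some i) := by
  simp only [cosetRelation, LinearMap.coprod_apply, LinearMap.id_apply, map_sub,
    Finsupp.linearCombination_single]
  rw [smul_sub, ← sub_eq_zero (a := _ - _)]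
  constructor <;> intro h <;> rw [← h] <;> abel

theorem rdCompatible_cosetExtension
    (hfin : ∀ J : Finset ι, ∃ m : M, ∀ i ∈ J, ∃ y : M, op (s i) • (m - x i) = op (r i) • y) :
    RDCompatible ((Submodule.span Rᵐᵒᵖ (Set.range (cosetRelation r s x))).mkQ ∘ₗ
      LinearMap.inl Rᵐᵒᵖ M (Option ι →₀ Rᵐᵒᵖ)) LinearMap.id := by
  refine rdCompatible_mkQ_comp _ _ fun w hw => ?_
  obtain ⟨c, rfl⟩ := Finsupp.mem_span_range_iff_exists_finsupp.1 hw
  obtain ⟨m, hm⟩ := hfin c.support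
  choose! y hy using hm
  let ψ := LinearMap.coprod LinearMap.id
    (Finsupp.linearCombination Rᵐᵒᵖ fun o : Option ι => o.elim m y)
  refine ⟨ψ, LinearMap.coprod_inl _ _, ?_⟩
  rw [Finsupp.sum, map_sum]
  refine Finset.sum_eq_zero fun i hi => ?_
  rw [map_smul, (coprod_cosetRelation_eq_zero_iff r s x _ i).2 (hy i hi), smul_zero]

end CosetRelation

theorem RDInjective.hasCosetFIP (hM : RDInjective R M) : HasCosetFIP R M := by
  intro ι r s x hfin
  let W := Submodule.span Rᵐᵒᵖ (Set.range (cosetRelation r s x))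
  obtain ⟨ρ, hρ⟩ := hM.exists_leftInverse (rdCompatible_cosetExtension r s x hfin)
  let v : Option ι → M := fun o => ρ (W.mkQ (0, Finsupp.single o 1))
  have hψ : ρ ∘ₗ W.mkQ = LinearMap.coprod LinearMap.id (Finsupp.linearCombination Rᵐᵒᵖ v) := by
    refine LinearMap.prod_ext ?_ (Finsupp.lhom_ext fun o a => ?_)
    · rw [LinearMap.comp_assoc, hρ, LinearMap.coprod_inl]
    · simp only [LinearMap.comp_apply, LinearMap.inr_apply, LinearMap.coprod_apply, map_zero,
        zero_add, Finsupp.linearCombination_single, v]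
      rw [← map_smul, ← map_smul, Prod.smul_mk, smul_zero, Finsupp.smul_single_one]
  refine ⟨v none, fun i => ⟨v (some i), ?_⟩⟩
  rw [← coprod_cosetRelation_eq_zero_iff, ← hψ, LinearMap.comp_apply, Submodule.mkQ_apply,
    (Submodule.Quotient.mk_eq_zero W).2 (Submodule.subset_span (Set.mem_range_self i)), map_zero]

theorem RDCoflat.exists_solution (hM : RDCoflat R M) {f : K →ₗ[Rᵐᵒᵖ] P} {g : K →ₗ[Rᵐᵒᵖ] M}
    (hfg : RDCompatible f g) {τ : Type*} [Fintype τ] [DecidableEq τ] (k : τ → K) (a r : τ → R)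
    (p : P) (q : τ → P) (h : ∀ j, f (k j) + op (a j) • p = op (r j) • q j) :
    ∃ m : M, ∀ j, ∃ y : M, g (k j) + op (a j) • m = op (r j) • y := by
  have hinl := Pushout.rdCompatible_inl hfg
  let c : τ → Option τ → R := fun j o => o.elim (a j) (Pi.single j (-r j))
  have hc : ∀ {N : Type u} [AddCommGroup N] [Module Rᵐᵒᵖ N] (ξ : Option τ → N) (j : τ),
      ∑ o, op (c j o) • ξ o = op (a j) • ξ none - op (r j) • ξ (some j) := fun ξ j => by
    rw [Fintype.sum_option, Finset.sum_eq_single j (fun l _ hl => by simp [c, hl]) (by simp)]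
    simp [c, sub_eq_add_neg]
  obtain ⟨y, hy⟩ := (hM _ _ hinl.injective hinl).exists_solution c (fun j => -g (k j))
    ⟨fun o => Pushout.inr f g (o.elim p q), fun j => by
      rw [hc, ← map_smul, ← map_smul, ← map_sub, map_neg, ← LinearMap.comp_apply,
        ← Pushout.inr_comp, LinearMap.comp_apply, ← map_neg]
      congr 1
      rw [eq_neg_iff_add_eq_zero, Option.elim_none, Option.elim_some, sub_add_eq_add_sub,
        add_comm, h j, sub_self]⟩
  refine ⟨y none, fun j => ⟨y (some j), ?_⟩⟩
  have hyj := hy j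
  rw [hc, eq_neg_iff_add_eq_zero] at hyj
  rw [← sub_eq_zero, ← hyj]
  abel

/-- The graph of a partial map `P ⇀ M` sending `P r` into `M r`; the case `r = 0` makes `G` a
graph at all. -/
def IsRDGraph (G : Submodule Rᵐᵒᵖ (P × M)) : Prop :=
  ∀ z ∈ G, ∀ (r : R) (q : P), z.1 = op r • q → ∃ w : M, z.2 = op r • w

namespace IsRDGraph

variable {G : Submodule Rᵐᵒᵖ (P × M)}

theorem rdCompatible (hG : IsRDGraph G) :
    RDCompatible (LinearMap.fst Rᵐᵒᵖ P M ∘ₗ G.subtype) (LinearMap.snd Rᵐᵒᵖ P M ∘ₗ G.subtype) :=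
  fun r z q hz => hG z z.2 r q hz

theorem eq_of_mem (hG : IsRDGraph G) {p : P} {u u' : M} (hu : (p, u) ∈ G) (hu' : (p, u') ∈ G) :
    u = u' := by
  have hsub := G.sub_mem hu hu'
  rw [Prod.mk_sub_mk, sub_self] at hsub
  exact sub_eq_zero.1 (hG.rdCompatible.map_eq_zero (k := ⟨_, hsub⟩) rfl)

theorem sSup {c : Set (Submodule Rᵐᵒᵖ (P × M))} (hc : ∀ G ∈ c, IsRDGraph G) (hne : c.Nonempty)
    (hdir : DirectedOn (· ≤ ·) c) : IsRDGraph (sSup c) := fun z hz => by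
  obtain ⟨G, hGc, hzG⟩ := (Submodule.mem_sSup_of_directed hne hdir).1 hz
  exact hc G hGc z hzG

theorem exists_sup_span_singleton (hM : RDCoflat R M) (hfip : HasCosetFIP R M)
    (hG : IsRDGraph G) (x : P) : ∃ m : M, IsRDGraph (G ⊔ Submodule.span Rᵐᵒᵖ {(x, m)}) := by
  classical
  -- a relation `n + x a = q r`, with `(n, u) ∈ G`, is indexed by `(r, a, (n, u), q)`
  let ι : Type u := {d : R × R × G × P // (d.2.2.1 : P × M).1 + op d.2.1 • x = op d.1 • d.2.2.2}
  obtain ⟨m, hm⟩ := hfip.exists_of_forall_finset (fun d : ι => (d.1.2.2.1 : P × M).2)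
    (fun d => d.1.2.1) (fun d => d.1.1) fun J =>
      hM.exists_solution hG.rdCompatible (τ := J) (fun d => d.1.1.2.2.1) (fun d => d.1.1.2.1)
        (fun d => d.1.1.1) x (fun d => d.1.1.2.2.2) (fun d => d.1.2) |>.imp
        fun m hm d hd => hm ⟨d, hd⟩
  refine ⟨m, fun z hz r q hzq => ?_⟩
  obtain ⟨w, hw, v, hv, rfl⟩ := Submodule.mem_sup.1 hz
  obtain ⟨a, rfl⟩ := Submodule.mem_span_singleton.1 hv
  exact hm ⟨(r, unop a, ⟨w, hw⟩, q), hzq⟩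

theorem exists_leftInverse (hG : IsRDGraph G) (htot : ∀ p : P, ∃ u : M, (p, u) ∈ G)
    {e : M →ₗ[Rᵐᵒᵖ] P} (he : LinearMap.range (e.prod LinearMap.id) ≤ G) :
    ∃ ρ : P →ₗ[Rᵐᵒᵖ] M, ρ ∘ₗ e = LinearMap.id := by
  let π := LinearEquiv.ofBijective (LinearMap.fst Rᵐᵒᵖ P M ∘ₗ G.subtype)
    ⟨(injective_iff_map_eq_zero _).2 fun z hz => Subtype.ext (Prod.ext hz
      (hG.rdCompatible.map_eq_zero hz)), fun p =>
      have ⟨_, hu⟩ := htot p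
      ⟨⟨_, hu⟩, rfl⟩⟩
  refine ⟨LinearMap.snd Rᵐᵒᵖ P M ∘ₗ G.subtype ∘ₗ π.symm.toLinearMap, LinearMap.ext fun m => ?_⟩
  change ((π.symm (e m) : G) : P × M).2 = m
  have hπ := π.apply_symm_apply (e m)
  generalize π.symm (e m) = z at hπ ⊢
  obtain ⟨⟨p, u⟩, hpu⟩ := z
  obtain rfl : p = e m := hπ
  exact hG.eq_of_mem hpu (he ⟨m, rfl⟩)

end IsRDGraph

theorem RDCoflat.exists_leftInverse (hM : RDCoflat R M) (hfip : HasCosetFIP R M)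
    {e : M →ₗ[Rᵐᵒᵖ] P} (he : RDCompatible e LinearMap.id) :
    ∃ ρ : P →ₗ[Rᵐᵒᵖ] M, ρ ∘ₗ e = LinearMap.id := by
  have hgraph : IsRDGraph (LinearMap.range (e.prod LinearMap.id)) := by
    rintro _ ⟨m, rfl⟩ r q hq
    exact he r m q hq
  obtain ⟨G, hle, hGmax⟩ := zorn_le_nonempty₀ {G | IsRDGraph G}
    (fun c hc hchain G hG => ⟨sSup c, IsRDGraph.sSup hc ⟨G, hG⟩ hchain.directedOn,
      fun _ => le_sSup⟩) _ hgraph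
  refine hGmax.prop.exists_leftInverse (fun p => ?_) hle
  obtain ⟨m, hm⟩ := hGmax.prop.exists_sup_span_singleton hM hfip p
  exact ⟨m, hGmax.le_of_ge hm le_sup_left
    (Submodule.mem_sup_right (Submodule.mem_span_singleton_self _))⟩

end RDInjectivity

/-- A right `R`-module `M` is RD-injective if and only if `M` is RD-coflat and, for
every family of subgroups `Nᵢ = (M rᵢ : sᵢ)` and every family `(xᵢ)` of elements of
`M` such that the cosets `xᵢ + Nᵢ` have the finite intersection property, the total
intersection of the cosets is non-empty. -/
theorem rdInjective_iff_rdCoflat_and_fip (R : Type u) [Ring R]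
    (M : Type u) [AddCommGroup M] [Module Rᵐᵒᵖ M] :
    RDInjective R M ↔
      (RDCoflat R M ∧
        ∀ (ι : Type u) (r s : ι → R) (x : ι → M),
          (∀ J : Finset ι, ∃ m : M, ∀ i ∈ J,
            ∃ y : M, op (s i) • (m - x i) = op (r i) • y) →
          ∃ m : M, ∀ i : ι, ∃ y : M, op (s i) • (m - x i) = op (r i) • y) :=
  ⟨fun hM => ⟨hM.rdCoflat, hM.hasCosetFIP⟩, fun ⟨hco, hfip⟩ =>
    rdInjective_of_forall_exists_leftInverse fun _ _ _ _ he => hco.exists_leftInverse hfip he⟩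
end

section
/- Let R be a commutative local ring with maximal ideal P and A a proper ideal of R. Then R/A is RD-flat if and only if the set A* of nonzero principal ideals contained in A is directed under inclusion (i.e., any two principal ideals contained in A are contained in a common principal ideal contained in A). -/
universe u

open MulOpposite

section RDDefsComm

variable (R : Type u) [CommRing R]

/-- `IsTensorZeroC R M N l` encodes the statement `∑ mᵢ ⊗ nᵢ = 0` in `M ⊗_R N`
(modules over a commutative ring `R`), via the universal property of the tensor
product: every `R`-balanced biadditive map kills the sum. -/
def IsTensorZeroC (M N : Type u) [AddCommGroup M] [Module R M]
    [AddCommGroup N] [Module R N] (l : List (M × N)) : Prop :=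
  ∀ (A : Type u) [AddCommGroup A], ∀ b : M → N → A,
    (∀ m₁ m₂ n, b (m₁ + m₂) n = b m₁ n + b m₂ n) →
    (∀ m n₁ n₂, b m (n₁ + n₂) = b m n₁ + b m n₂) →
    (∀ (r : R) (m : M) (n : N), b (r • m) n = b m (r • n)) →
    (l.map fun p => b p.1 p.2).sum = 0

/-- An `R`-module `M` (over a commutative ring) is RD-flat if tensoring with `M`
preserves exactness of all RD-exact sequences; equivalently, for every injective
linear map `f : H → F` whose image is a relatively divisible submodule
(`rF ∩ f(H) = r f(H)` for all `r`), the induced map `M ⊗ H → M ⊗ F` is injective. -/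
def RDFlatC (M : Type u) [AddCommGroup M] [Module R M] : Prop :=
  ∀ (H F : Type u) [AddCommGroup H] [Module R H] [AddCommGroup F] [Module R F],
    ∀ f : H →ₗ[R] F, Function.Injective f →
    (∀ (r : R) (h : H) (y : F), f h = r • y → ∃ h' : H, h = r • h') →
    ∀ l : List (M × H),
      IsTensorZeroC R M F (l.map fun p => (p.1, f p.2)) → IsTensorZeroC R M H l

/-- An `R`-module `N` is RD-injective if every homomorphism into `N` from a
relatively divisible submodule of an `R`-module extends to the whole module. -/
def RDInjectiveC (N : Type u) [AddCommGroup N] [Module R N] : Prop :=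
  ∀ (K L : Type u) [AddCommGroup K] [Module R K] [AddCommGroup L] [Module R L],
    ∀ f : K →ₗ[R] L, Function.Injective f →
    (∀ (r : R) (k : K) (y : L), f k = r • y → ∃ k' : K, k = r • k') →
    ∀ g : K →ₗ[R] N, ∃ h : L →ₗ[R] N, h.comp f = g

/-- An injective linear map `f : K → L` of `R`-modules is pure if every finite
system of linear equations with constants in `K` which is solvable in `L` is
solvable in `K`. -/
def IsPureC {K L : Type u} [AddCommGroup K] [Module R K] [AddCommGroup L]
    [Module R L] (f : K →ₗ[R] L) : Prop :=
  ∀ (m n : ℕ) (a : Fin m → Fin n → R) (k : Fin m → K),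
    (∃ x : Fin n → L, ∀ i, (∑ j, a i j • x j) = f (k i)) →
    ∃ y : Fin n → K, ∀ i, (∑ j, a i j • y j) = k i

/-- An `R`-module `M` is RD-coflat if every RD-exact sequence `0 → M → P → Q → 0`
is pure-exact, i.e. whenever `M` embeds as a relatively divisible submodule of a
module `P`, it is a pure submodule of `P`. -/
def RDCoflatC (M : Type u) [AddCommGroup M] [Module R M] : Prop :=
  ∀ (P : Type u) [AddCommGroup P] [Module R P],
    ∀ f : M →ₗ[R] P, Function.Injective f →
    (∀ (r : R) (x : M) (y : P), f x = r • y → ∃ x' : M, x = r • x') →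
    IsPureC R f

/-- An `R`-module `F` is RD-projective if every homomorphism from `F` to a quotient
in an RD-exact sequence (the kernel is a relatively divisible submodule) lifts. -/
def RDProjectiveC (F : Type u) [AddCommGroup F] [Module R F] : Prop :=
  ∀ (L Q : Type u) [AddCommGroup L] [Module R L] [AddCommGroup Q] [Module R Q],
    ∀ p : L →ₗ[R] Q, Function.Surjective p →
    (∀ (r : R) (x : L), p x = 0 → (∃ y : L, x = r • y) →
      ∃ z : L, p z = 0 ∧ x = r • z) →
    ∀ g : F →ₗ[R] Q, ∃ h : F →ₗ[R] L, p.comp h = g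

end RDDefsComm

/-! Tensoring with `R ⧸ A` is reduction modulo `A`, so `R ⧸ A` is RD-flat iff `H ∩ A F = A H` for
every relatively divisible submodule `H ≤ F`. If `A` is directed under divisibility, every element
of `A F` is a single multiple `c • y` with `c ∈ A`, and relative divisibility pulls it back into
`A H`. Conversely, RD-flatness makes the character module of `R ⧸ A` RD-injective, so the dual of
the RD-epimorphism `π` onto `R ⧸ A` from a direct sum of cyclically presented modules `R ⧸ (r)`
splits; a character argument then lifts `1` to some `p` killed by the given `a, b ∈ A`. In the
expansion of `π p = 1` over the summands, locality makes the term of one summand `R ⧸ (c)` a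
unit, which forces `c ∈ A` and `c ∣ a, b`. -/

open TensorProduct DirectSum

section TensorCriterion

variable {R : Type u} [CommRing R] {M N : Type u} [AddCommGroup M] [Module R M]
  [AddCommGroup N] [Module R N]

theorem isTensorZeroC_iff (l : List (M × N)) :
    IsTensorZeroC R M N l ↔ (l.map fun p => p.1 ⊗ₜ[R] p.2).sum = 0 := by
  refine ⟨fun h => h (M ⊗[R] N) (· ⊗ₜ ·) add_tmul tmul_add smul_tmul, ?_⟩
  intro h A _ b hb₁ hb₂ hb₃
  let B : M →+ N →+ A :=
    AddMonoidHom.mk' (fun m => AddMonoidHom.mk' (b m) (hb₂ m))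
      fun m₁ m₂ => AddMonoidHom.ext (hb₁ m₁ m₂)
  calc (l.map fun p => b p.1 p.2).sum
      = liftAddHom B hb₃ (l.map fun p => p.1 ⊗ₜ[R] p.2).sum := by
        rw [map_list_sum, List.map_map]; rfl
    _ = 0 := by rw [h, map_zero]

theorem exists_list_eq_sum_tmul (z : M ⊗[R] N) :
    ∃ l : List (M × N), z = (l.map fun p => p.1 ⊗ₜ[R] p.2).sum := by
  induction z using TensorProduct.induction_on with
  | zero => exact ⟨[], rfl⟩
  | tmul m n => exact ⟨[(m, n)], by simp⟩
  | add x y hx hy =>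
    obtain ⟨lx, rfl⟩ := hx
    obtain ⟨ly, rfl⟩ := hy
    exact ⟨lx ++ ly, by simp⟩

theorem rdFlatC_iff_lTensor_injective :
    RDFlatC R M ↔ ∀ (H F : Type u) [AddCommGroup H] [Module R H] [AddCommGroup F] [Module R F]
      (f : H →ₗ[R] F), Function.Injective f →
      (∀ (r : R) (h : H) (y : F), f h = r • y → ∃ h' : H, h = r • h') →
      Function.Injective (f.lTensor M) := by
  have lTensor_sum_tmul : ∀ {H F : Type u} [AddCommGroup H] [Module R H] [AddCommGroup F]
      [Module R F] (f : H →ₗ[R] F) (l : List (M × H)),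
      f.lTensor M (l.map fun p => p.1 ⊗ₜ[R] p.2).sum =
        ((l.map fun p => (p.1, f p.2)).map fun p => p.1 ⊗ₜ[R] p.2).sum := by
    intros
    simp [map_list_sum, Function.comp_def]
  constructor
  · intro hM H F _ _ _ _ f hf hRD
    refine (injective_iff_map_eq_zero _).mpr fun z hz => ?_
    obtain ⟨l, rfl⟩ := exists_list_eq_sum_tmul z
    rw [lTensor_sum_tmul] at hz
    exact (isTensorZeroC_iff l).mp (hM H F f hf hRD l ((isTensorZeroC_iff _).mpr hz))
  · intro hM H F _ _ _ _ f hf hRD l hl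
    rw [isTensorZeroC_iff, ← lTensor_sum_tmul] at hl
    exact (isTensorZeroC_iff l).mpr (hM H F f hf hRD (by rwa [map_zero]))

end TensorCriterion

namespace CharacterModule

variable {R : Type u} [CommRing R] {P Q : Type u} [AddCommGroup P] [Module R P]
  [AddCommGroup Q] [Module R Q]

theorem exists_dual_eq_of_ker_le (g : P →ₗ[R] Q) (ψ : CharacterModule P)
    (hψ : ∀ p, g p = 0 → ψ p = 0) : ∃ Φ : CharacterModule Q, dual g Φ = ψ := by
  let K := LinearMap.ker g
  let ψ' : CharacterModule (P ⧸ K) := QuotientAddGroup.lift K.toAddSubgroup ψ hψ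
  let j : (P ⧸ K) →ₗ[R] Q := K.liftQ g le_rfl
  have hj : Function.Injective j := by
    rw [← LinearMap.ker_eq_bot]
    exact K.ker_liftQ_eq_bot g le_rfl le_rfl
  obtain ⟨Φ, hΦ⟩ := dual_surjective_of_injective j hj ψ'
  exact ⟨Φ, DFunLike.ext _ _ fun p => DFunLike.congr_fun hΦ (Submodule.Quotient.mk p)⟩

theorem exists_eq_smul_of_smul_eq_zero (r : R) (ψ : CharacterModule P)
    (hψ : ∀ p : P, r • p = 0 → ψ p = 0) : ∃ φ : CharacterModule P, ψ = r • φ := by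
  obtain ⟨φ, hφ⟩ := exists_dual_eq_of_ker_le (LinearMap.lsmul R P r) ψ hψ
  exact ⟨φ, hφ.symm⟩

theorem exists_eq_smul_add_smul (a b : R) (ψ : CharacterModule P)
    (hψ : ∀ p : P, a • p = 0 → b • p = 0 → ψ p = 0) :
    ∃ φ₁ φ₂ : CharacterModule P, ψ = a • φ₁ + b • φ₂ := by
  let g : P →ₗ[R] P × P := (LinearMap.lsmul R P a).prod (LinearMap.lsmul R P b)
  obtain ⟨Φ, hΦ⟩ := exists_dual_eq_of_ker_le g ψ fun p hp =>
    hψ p (congrArg Prod.fst hp) (congrArg Prod.snd hp)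
  refine ⟨Φ.comp (AddMonoidHom.inl P P), Φ.comp (AddMonoidHom.inr P P),
    DFunLike.ext _ _ fun p => ?_⟩
  rw [← hΦ]
  show Φ (a • p, b • p) = Φ (a • p, 0) + Φ (0, b • p)
  rw [← map_add, Prod.mk_add_mk, add_zero, zero_add]

end CharacterModule

section CharacterModuleOfRDFlat

open CharacterModule

variable {R : Type u} [CommRing R] {M P : Type u} [AddCommGroup M] [Module R M]
  [AddCommGroup P] [Module R P]

theorem RDFlatC.rdInjectiveC_characterModule (hM : RDFlatC R M) :
    RDInjectiveC R (CharacterModule M) := by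
  intro K L _ _ _ _ f hf hRD g
  have hinj : Function.Injective (f.rTensor M) :=
    (f.lTensor_inj_iff_rTensor_inj M).mp (rdFlatC_iff_lTensor_injective.mp hM K L f hf hRD)
  exact rTensor_injective_iff_lcomp_surjective.mp hinj g

variable (ε : P →ₗ[R] M) (hε : ∀ (r : R) (m : M), r • m = 0 → ∃ p, ε p = m ∧ r • p = 0)
include hε

theorem dual_injective_of_lifts_torsion : Function.Injective (dual ε) :=
  dual_injective_of_surjective ε fun m => (hε 0 m (zero_smul R m)).imp fun _ hp => hp.1

theorem dual_relativelyDivisible_of_lifts_torsion (r : R) (χ : CharacterModule M)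
    (ψ : CharacterModule P) (h : dual ε χ = r • ψ) : ∃ φ : CharacterModule M, χ = r • φ := by
  refine exists_eq_smul_of_smul_eq_zero r χ fun m hm => ?_
  obtain ⟨p, rfl, hp⟩ := hε r m hm
  calc χ (ε p) = ψ (r • p) := DFunLike.congr_fun h p
    _ = 0 := by rw [hp, map_zero]

theorem RDFlatC.exists_lift_of_smul_eq_zero (hM : RDFlatC R M) {a b : R} {m : M}
    (ha : a • m = 0) (hb : b • m = 0) : ∃ p, ε p = m ∧ a • p = 0 ∧ b • p = 0 := by
  obtain ⟨σ, hσ⟩ := hM.rdInjectiveC_characterModule _ _ (dual ε)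
    (dual_injective_of_lifts_torsion ε hε) (dual_relativelyDivisible_of_lifts_torsion ε hε)
    LinearMap.id
  -- A character separating `m` from `ε (ker a ⊓ ker b)` would, through `σ`, be of the form
  -- `a • _ + b • _` and hence vanish at `m`.
  by_contra hm
  let W := (LinearMap.ker ((LinearMap.lsmul R P a).prod (LinearMap.lsmul R P b))).map ε
  have hmW : W.mkQ m ≠ 0 := by
    rw [Submodule.mkQ_apply, Ne, Submodule.Quotient.mk_eq_zero]
    rintro ⟨p, hp, rfl⟩
    exact hm ⟨p, rfl, congrArg Prod.fst hp, congrArg Prod.snd hp⟩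
  obtain ⟨χ₀, hχ₀⟩ := exists_character_apply_ne_zero_of_ne_zero hmW
  obtain ⟨φ₁, φ₂, hφ⟩ := exists_eq_smul_add_smul a b (dual ε (dual W.mkQ χ₀)) fun p ha hb => by
    show χ₀ (W.mkQ (ε p)) = 0
    rw [Submodule.mkQ_apply, (Submodule.Quotient.mk_eq_zero _).mpr
      (Submodule.mem_map_of_mem (LinearMap.mem_ker.mpr (Prod.ext ha hb))), map_zero]
  refine hχ₀ ?_
  calc χ₀ (W.mkQ m) = σ (dual ε (dual W.mkQ χ₀)) m :=
        (DFunLike.congr_fun (LinearMap.congr_fun hσ (dual W.mkQ χ₀)) m).symm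
    _ = σ φ₁ (a • m) + σ φ₂ (b • m) := by rw [hφ, map_add, map_smul, map_smul]; rfl
    _ = 0 := by rw [ha, hb, map_zero, map_zero, add_zero]

end CharacterModuleOfRDFlat

section CyclicCover

variable (R : Type u) [CommRing R] (M : Type u) [AddCommGroup M] [Module R M]

abbrev CyclicCover : Type u := ⨁ i : {q : R × M // q.1 • q.2 = 0}, R ⧸ Ideal.span {i.1.1}

variable {R M}

open Classical in
noncomputable def CyclicCover.π : CyclicCover R M →ₗ[R] M :=
  toModule R _ _ fun i => (Ideal.span {i.1.1}).liftQ (LinearMap.toSpanSingleton R M i.1.2)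
    ((Submodule.span_singleton_le_iff_mem _ _).mpr i.2)

open Classical in
theorem CyclicCover.π_lof (i : {q : R × M // q.1 • q.2 = 0}) (t : R) :
    π (lof R _ (fun i : {q : R × M // q.1 • q.2 = 0} => R ⧸ Ideal.span {i.1.1}) i
      (Ideal.Quotient.mk _ t)) = t • i.1.2 := by
  rw [π, toModule_lof]
  rfl

theorem CyclicCover.exists_π_eq_and_smul_eq_zero (r : R) (m : M) (hm : r • m = 0) :
    ∃ p : CyclicCover R M, π p = m ∧ r • p = 0 := by
  classical
  refine ⟨lof R _ _ ⟨(r, m), hm⟩ (Ideal.Quotient.mk _ 1), by rw [π_lof, one_smul], ?_⟩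
  rw [← map_smul, ← Ideal.Quotient.mk_eq_mk, ← Submodule.Quotient.mk_smul, smul_eq_mul, mul_one,
    Ideal.Quotient.mk_eq_mk, Ideal.Quotient.eq_zero_iff_mem.mpr (Ideal.mem_span_singleton_self r),
    map_zero]

theorem CyclicCover.exists_dvd_of_π_eq_one [IsLocalRing R] {A : Ideal R} (hA : A ≠ ⊤)
    {p : CyclicCover R (R ⧸ A)} (hp : π p = 1) : ∃ c ∈ A, ∀ x : R, x • p = 0 → c ∣ x := by
  classical
  have := Ideal.Quotient.nontrivial_iff.mpr hA
  have : IsLocalRing (R ⧸ A) := .of_surjective' _ Ideal.Quotient.mk_surjective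
  have : IsLocalHom (Ideal.Quotient.mk A) := isLocalHom_of_le_jacobson_bot A <|
    (IsLocalRing.jacobson_eq_maximalIdeal (⊥ : Ideal R) bot_ne_top).symm ▸
      IsLocalRing.le_maximalIdeal hA
  have hsum : ∑ i ∈ p.support, π (of _ i (p i)) = 1 := by rw [← map_sum, sum_support_of, hp]
  obtain ⟨⟨⟨c, y⟩, hcy⟩, -, hunit⟩ := IsLocalRing.exists_of_isUnit_sum (hsum ▸ isUnit_one)
  obtain ⟨t, ht⟩ := Ideal.Quotient.mk_surjective (p ⟨(c, y), hcy⟩)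
  rw [← ht, ← lof_eq_of R, π_lof, Algebra.smul_def, Ideal.Quotient.algebraMap_eq] at hunit
  refine ⟨c, ?_, fun x hx => ?_⟩
  · have hcy' : Ideal.Quotient.mk A c * y = 0 := by
      rw [← Ideal.Quotient.algebraMap_eq, ← Algebra.smul_def]; exact hcy
    rw [← Ideal.Quotient.eq_zero_iff_mem, ← (isUnit_of_mul_isUnit_right hunit).mul_left_eq_zero]
    exact hcy'
  · have hxt : x • p ⟨(c, y), hcy⟩ = 0 := by rw [← DFinsupp.smul_apply, hx]; rfl
    rw [← ht, ← Ideal.Quotient.mk_eq_mk, ← Submodule.Quotient.mk_smul, Ideal.Quotient.mk_eq_mk,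
      Ideal.Quotient.eq_zero_iff_mem, Ideal.mem_span_singleton, smul_eq_mul] at hxt
    exact ((IsUnit.of_map _ t (isUnit_of_mul_isUnit_left hunit)).dvd_mul_right).mp hxt

end CyclicCover

section QuotientRDFlat

variable {R : Type u} [CommRing R] {A : Ideal R}

theorem principal_directed_iff_directedOn_dvd :
    (∀ a b : R, a ≠ 0 → b ≠ 0 → Ideal.span {a} ≤ A → Ideal.span {b} ≤ A →
      ∃ c : R, c ≠ 0 ∧ Ideal.span {c} ≤ A ∧
        Ideal.span {a} ≤ Ideal.span {c} ∧ Ideal.span {b} ≤ Ideal.span {c}) ↔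
      DirectedOn (fun a c => c ∣ a) (A : Set R) := by
  simp only [Ideal.span_singleton_le_span_singleton]
  simp only [Ideal.span_singleton_le_iff_mem]
  constructor
  · intro h a ha b hb
    rcases eq_or_ne a 0 with rfl | ha₀
    · exact ⟨b, hb, dvd_zero b, dvd_rfl⟩
    rcases eq_or_ne b 0 with rfl | hb₀
    · exact ⟨a, ha, dvd_rfl, dvd_zero a⟩
    obtain ⟨c, -, hc⟩ := h a b ha₀ hb₀ ha hb
    exact ⟨c, hc⟩
  · intro h a b ha₀ _ ha hb
    obtain ⟨c, hc, hca, hcb⟩ := h a ha b hb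
    exact ⟨c, fun hc₀ => ha₀ (zero_dvd_iff.mp (hc₀ ▸ hca)), hc, hca, hcb⟩

theorem exists_eq_smul_of_mem_smul_top (hA : DirectedOn (fun a c => c ∣ a) (A : Set R))
    {N : Type*} [AddCommGroup N] [Module R N] {z : N} (hz : z ∈ A • (⊤ : Submodule R N)) :
    ∃ c ∈ A, ∃ y : N, z = c • y := by
  refine Submodule.smul_induction_on hz (fun a ha n _ => ⟨a, ha, n, rfl⟩) ?_
  rintro _ _ ⟨c₁, hc₁, y₁, rfl⟩ ⟨c₂, hc₂, y₂, rfl⟩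
  obtain ⟨c, hc, ⟨u₁, rfl⟩, ⟨u₂, rfl⟩⟩ := hA c₁ hc₁ c₂ hc₂
  exact ⟨c, hc, u₁ • y₁ + u₂ • y₂, by simp only [smul_add, mul_smul]⟩

theorem rdFlatC_quotient_of_directedOn_dvd (hA : DirectedOn (fun a c => c ∣ a) (A : Set R)) :
    RDFlatC R (R ⧸ A) := by
  refine rdFlatC_iff_lTensor_injective.mpr fun H F _ _ _ _ f _ hRD =>
    (injective_iff_map_eq_zero _).mpr fun z hz => ?_
  obtain ⟨h, rfl⟩ : ∃ h : H, 1 ⊗ₜ h = z := by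
    obtain ⟨h, hh⟩ := Submodule.mkQ_surjective _ ((quotTensorEquivQuotSMul H A) z)
    exact ⟨h, by rw [← quotTensorEquivQuotSMul_symm_mk, ← Submodule.mkQ_apply, hh,
      LinearEquiv.symm_apply_apply]⟩
  rw [LinearMap.lTensor_tmul] at hz
  have hfh := congrArg (quotTensorEquivQuotSMul F A) hz
  rw [quotTensorEquivQuotSMul_mk_one_tmul, map_zero, Submodule.Quotient.mk_eq_zero] at hfh
  obtain ⟨c, hc, y, hy⟩ := exists_eq_smul_of_mem_smul_top hA hfh
  obtain ⟨h', rfl⟩ := hRD c h y hy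
  rw [← quotTensorEquivQuotSMul_symm_mk, (Submodule.Quotient.mk_eq_zero _).mpr
    (Submodule.smul_mem_smul hc Submodule.mem_top), map_zero]

theorem directedOn_dvd_of_rdFlatC_quotient [IsLocalRing R] (hA : A ≠ ⊤)
    (hflat : RDFlatC R (R ⧸ A)) : DirectedOn (fun a c => c ∣ a) (A : Set R) := by
  have kills_one : ∀ a ∈ A, a • (1 : R ⧸ A) = 0 := fun a ha => by
    rw [Algebra.smul_def, mul_one, Ideal.Quotient.algebraMap_eq, Ideal.Quotient.eq_zero_iff_mem]
    exact ha
  intro a ha b hb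
  obtain ⟨p, hp, hap, hbp⟩ := hflat.exists_lift_of_smul_eq_zero CyclicCover.π
    CyclicCover.exists_π_eq_and_smul_eq_zero (kills_one a ha) (kills_one b hb)
  obtain ⟨c, hc, hdvd⟩ := CyclicCover.exists_dvd_of_π_eq_one hA hp
  exact ⟨c, hc, hdvd a hap, hdvd b hbp⟩

end QuotientRDFlat

/-- Let `R` be a commutative local ring and `A` a proper ideal of `R`.  Then `R/A` is
RD-flat if and only if the set of nonzero principal ideals contained in `A` is
directed under inclusion. -/
theorem quotient_rdFlat_iff_principal_directed (R : Type u) [CommRing R]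
    [IsLocalRing R] (A : Ideal R) (hA : A ≠ ⊤) :
    RDFlatC R (R ⧸ A) ↔
      ∀ a b : R, a ≠ 0 → b ≠ 0 → Ideal.span {a} ≤ A → Ideal.span {b} ≤ A →
        ∃ c : R, c ≠ 0 ∧ Ideal.span {c} ≤ A ∧
          Ideal.span {a} ≤ Ideal.span {c} ∧ Ideal.span {b} ≤ Ideal.span {c} := by
  rw [principal_directed_iff_directedOn_dvd]
  exact ⟨directedOn_dvd_of_rdFlatC_quotient hA, rdFlatC_quotient_of_directedOn_dvd⟩
end
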